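/- arXiv:2212.11722 — 5 statements merged into one kernel-verified Lean document; each statement's English description precedes it below -/
import Mathlib

section
/- Let F : [0,∞) → [0,∞) be a nonincreasing function and α ∈ (0,1]. Then ( (1/α) ∫₀^∞ F(t) t^{1/α − 1} dt )^α ≤ ∫₀^∞ F(t)^α dt, where both integrals are Lebesgue integrals with values in [0,∞]. -/
/-!
Put `f = F^α`, `p = 1/α ≥ 1` and `Φ(t) = ∫₀ᵗ f`. Since `f` is nonincreasing,
`t f(t) ≤ Φ(t)`, hence `F(t) t^(p-1) = f(t) (t f(t))^(p-1) ≤ f(t) Φ(t)^(p-1)`. Off the countably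
many discontinuities of `f`, the right-hand side is `1/p` times the derivative of `Φ^p`, so
`p ∫₀ᵀ f Φ^(p-1) = Φ(T)^p ≤ (∫₀^∞ f)^p`. Letting `T → ∞` and taking `α`-th powers gives the
inequality.
-/

open MeasureTheory Set intervalIntegral
open scoped ENNReal

theorem setLIntegral_Ioi_le_of_forall_Ioc_le {μ : Measure ℝ} {g : ℝ → ℝ≥0∞} {a : ℝ}
    {C : ℝ≥0∞} (h : ∀ T, a ≤ T → ∫⁻ t in Ioc a T, g t ∂μ ≤ C) :
    ∫⁻ t in Ioi a, g t ∂μ ≤ C := by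
  have hmono : Monotone fun n : ℕ => Ioc a (a + n) := fun _ _ hmn =>
    Ioc_subset_Ioc_right (by gcongr)
  have hunion : ⋃ n : ℕ, Ioc a (a + n) = Ioi a :=
    iUnion_Ioc_eq_Ioi_self_iff.2 fun x _ => (exists_nat_ge (x - a)).imp fun _ _ => by linarith
  rw [← hunion, setLIntegral_iUnion_of_directed _ hmono.directed_le]
  exact iSup_le fun n => h _ (by simp)

theorem ofReal_intervalIntegral_eq_setLIntegral {g : ℝ → ℝ} {a b : ℝ} (hab : a ≤ b)
    (hg : IntervalIntegrable g volume a b) (hg0 : ∀ t ∈ Ioc a b, 0 ≤ g t) :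
    ENNReal.ofReal (∫ t in a..b, g t) = ∫⁻ t in Ioc a b, ENNReal.ofReal (g t) := by
  rw [integral_of_le hab, ofReal_integral_eq_lintegral_ofReal hg.1
    ((ae_restrict_iff' measurableSet_Ioc).2 (.of_forall hg0))]

namespace Antitone

variable {f : ℝ → ℝ}

theorem intervalIntegrable_mul_rpow_primitive (hf : Antitone f) {p q : ℝ} (hq : 0 ≤ q)
    (a b : ℝ) :
    IntervalIntegrable (fun t => f t * p * (∫ s in a..t, f s) ^ q) volume a b :=
  (hf.intervalIntegrable.mul_const p).mul_continuousOn
    ((continuous_primitive (fun _ _ => hf.intervalIntegrable) a).rpow_const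
      fun _ => Or.inr hq).continuousOn

theorem integral_mul_rpow_primitive (hf : Antitone f) {p : ℝ} (hp : 1 ≤ p) (a b : ℝ) :
    ∫ t in a..b, f t * p * (∫ s in a..t, f s) ^ (p - 1) = (∫ s in a..b, f s) ^ p := by
  rw [integral_eq_of_hasDerivAt_off_countable _ _ hf.countable_not_continuousAt
      ((continuous_primitive (fun _ _ => hf.intervalIntegrable) a).rpow_const
        fun _ => Or.inr (by linarith)).continuousOn
      (fun t ht => (integral_hasDerivAt_right hf.intervalIntegrable
        hf.measurable.stronglyMeasurable.stronglyMeasurableAtFilter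
        (not_not.mp ht.2)).rpow_const (Or.inr hp))
      (hf.intervalIntegrable_mul_rpow_primitive (by linarith) a b),
    integral_same, Real.zero_rpow (by linarith), sub_zero]

theorem mul_le_integral (hf : Antitone f) {t : ℝ} (ht : 0 ≤ t) :
    t * f t ≤ ∫ s in 0..t, f s := by
  simpa using integral_mono_on ht intervalIntegrable_const (hf.intervalIntegrable (μ := volume))
    fun s hs => hf hs.2

theorem rpow_mul_rpow_sub_one_le (hf : Antitone f) (hf0 : ∀ t, 0 ≤ f t) {p t : ℝ}
    (hp : 1 ≤ p) (ht : 0 ≤ t) :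
    f t ^ p * t ^ (p - 1) ≤ f t * (∫ s in 0..t, f s) ^ (p - 1) := by
  calc f t ^ p * t ^ (p - 1) = f t * (t * f t) ^ (p - 1) := by
        have hpow : f t ^ p = f t * f t ^ (p - 1) := by
          conv_lhs => rw [← add_sub_cancel (1 : ℝ) p]
          rw [Real.rpow_add' (hf0 t) (by linarith), Real.rpow_one]
        rw [hpow, Real.mul_rpow ht (hf0 t)]
        ring
    _ ≤ f t * (∫ s in 0..t, f s) ^ (p - 1) := by
        have := hf0 t
        gcongr
        exact hf.mul_le_integral ht

theorem lintegral_rpow_mul_rpow_sub_one_le (hf : Antitone f) (hf0 : ∀ t, 0 ≤ f t) {p : ℝ}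
    (hp : 1 ≤ p) :
    ENNReal.ofReal p * ∫⁻ t in Ioi 0, ENNReal.ofReal (f t ^ p * t ^ (p - 1)) ≤
      (∫⁻ t in Ioi 0, ENNReal.ofReal (f t)) ^ p := by
  have hprimitive_le (T : ℝ) (hT : 0 ≤ T) :
      ∫⁻ t in Ioc 0 T, ENNReal.ofReal (f t * p * (∫ s in 0..t, f s) ^ (p - 1)) ≤
        (∫⁻ t in Ioi 0, ENNReal.ofReal (f t)) ^ p := by
    have hΦ0 (t : ℝ) (ht : 0 ≤ t) : 0 ≤ ∫ s in 0..t, f s :=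
      integral_nonneg ht fun s _ => hf0 s
    rw [← ofReal_intervalIntegral_eq_setLIntegral hT
        (hf.intervalIntegrable_mul_rpow_primitive (by linarith) 0 T)
        fun t ht => by have := hΦ0 t ht.1.le; have := hf0 t; positivity,
      hf.integral_mul_rpow_primitive hp,
      ← ENNReal.ofReal_rpow_of_nonneg (hΦ0 T hT) (by linarith),
      ofReal_intervalIntegral_eq_setLIntegral hT (hf.intervalIntegrable (μ := volume))
        fun t _ => hf0 t]
    gcongr
    exact Ioc_subset_Ioi_self
  calc ENNReal.ofReal p * ∫⁻ t in Ioi 0, ENNReal.ofReal (f t ^ p * t ^ (p - 1))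
      = ∫⁻ t in Ioi 0, ENNReal.ofReal (p * (f t ^ p * t ^ (p - 1))) := by
        simp_rw [ENNReal.ofReal_mul (by linarith : 0 ≤ p)]
        exact (lintegral_const_mul' _ _ ENNReal.ofReal_ne_top).symm
    _ ≤ ∫⁻ t in Ioi 0, ENNReal.ofReal (f t * p * (∫ s in 0..t, f s) ^ (p - 1)) := by
        refine setLIntegral_mono' measurableSet_Ioi fun t ht => ENNReal.ofReal_le_ofReal ?_
        have := mul_le_mul_of_nonneg_left (hf.rpow_mul_rpow_sub_one_le hf0 hp (le_of_lt ht))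
          (by linarith : 0 ≤ p)
        linarith
    _ ≤ _ := setLIntegral_Ioi_le_of_forall_Ioc_le hprimitive_le

end Antitone

/-- For a nonincreasing function `F : [0,∞) → [0,∞)` and `α ∈ (0,1]`,
`((1/α) ∫₀^∞ F(t) t^{1/α-1} dt)^α ≤ ∫₀^∞ F(t)^α dt`, where both integrals are
Lebesgue integrals with values in `[0,∞]`. -/
theorem rpow_integral_le_integral_rpow_of_antitone (F : ℝ → ℝ) (hF0 : ∀ t, 0 ≤ F t)
    (hFmono : ∀ s t : ℝ, 0 ≤ s → s ≤ t → F t ≤ F s)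
    (α : ℝ) (hα0 : 0 < α) (hα1 : α ≤ 1) :
    (ENNReal.ofReal (1 / α) *
        ∫⁻ t in Set.Ioi (0 : ℝ), ENNReal.ofReal (F t * t ^ (1 / α - 1))) ^ α ≤
      ∫⁻ t in Set.Ioi (0 : ℝ), ENNReal.ofReal (F t ^ α) := by
  set f : ℝ → ℝ := fun t => F (max t 0) ^ α
  have hf : Antitone f := fun s t hst =>
    Real.rpow_le_rpow (hF0 _) (hFmono _ _ (le_max_right s 0) (max_le_max hst le_rfl)) hα0.le
  have hfF (t : ℝ) (ht : 0 < t) : f t = F t ^ α := by simp only [f, max_eq_left ht.le]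
  have hf_rpow (t : ℝ) (ht : 0 < t) : f t ^ (1 / α) = F t := by
    rw [hfF t ht, one_div, Real.rpow_rpow_inv (hF0 t) hα0.ne']
  calc (ENNReal.ofReal (1 / α) *
        ∫⁻ t in Ioi 0, ENNReal.ofReal (F t * t ^ (1 / α - 1))) ^ α
      = (ENNReal.ofReal (1 / α) *
        ∫⁻ t in Ioi 0, ENNReal.ofReal (f t ^ (1 / α) * t ^ (1 / α - 1))) ^ α := by
        congr 2
        exact setLIntegral_congr_fun measurableSet_Ioi fun t ht => by rw [hf_rpow t ht]
    _ ≤ ((∫⁻ t in Ioi 0, ENNReal.ofReal (f t)) ^ (1 / α)) ^ α :=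
        ENNReal.rpow_le_rpow (hf.lintegral_rpow_mul_rpow_sub_one_le
          (fun t => Real.rpow_nonneg (hF0 _) α) (one_le_one_div hα0 hα1)) hα0.le
    _ = ∫⁻ t in Ioi 0, ENNReal.ofReal (F t ^ α) := by
        rw [← ENNReal.rpow_mul, one_div_mul_cancel hα0.ne', ENNReal.rpow_one]
        exact setLIntegral_congr_fun measurableSet_Ioi fun t ht => by rw [hfF t ht]
end

section
/- Let b be a connected graph with standard weights on a countable vertex set X with root o, combinatorial graph distance d, spheres S_k := {x : d(x,o) = k}, |x| := d(x,o), and suppose no two vertices in the same sphere are adjacent. Then the following are equivalent: (i) b is an anti-tree, i.e., for every k ≥ 0, every vertex of S_k is adjacent to every vertex of S_{k+1}, and there are no other edges; (ii) for all vertices x, x', y, y' with |x| = |x'|, |y| = |y'|, (x = y ⟺ x' = y'), and (x = y' ⟺ x' = y), there exists a graph automorphism ι of b with ι(x) = x', ι(x') = x, ι(y) = y', ι(y') = y. -/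
open SimpleGraph

private lemma adj_dist_succ {X : Type*} (G : SimpleGraph X) (hconn : G.Connected) (o : X)
    (hsphere : ∀ x y, G.Adj x y → G.dist o x ≠ G.dist o y) {x y : X} (h : G.Adj x y) :
    G.dist o x + 1 = G.dist o y ∨ G.dist o y + 1 = G.dist o x := by
  have h1 : G.dist x y = 1 := SimpleGraph.dist_eq_one_iff_adj.mpr h
  have h2 : G.dist y x = 1 := SimpleGraph.dist_eq_one_iff_adj.mpr h.symm
  have t1 : G.dist o y ≤ G.dist o x + 1 := by
    have := hconn.dist_triangle (u := o) (v := x) (w := y); omega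
  have t2 : G.dist o x ≤ G.dist o y + 1 := by
    have := hconn.dist_triangle (u := o) (v := y) (w := x); omega
  have := hsphere x y h
  omega

/-- level-preserving bijections are automorphisms of anti-trees -/
private def levelIso {X : Type*} (G : SimpleGraph X) (o : X)
    (hanti : ∀ x y, G.Adj x y ↔ (G.dist o x + 1 = G.dist o y ∨ G.dist o y + 1 = G.dist o x))
    (π : X ≃ X) (hπ : ∀ z, G.dist o (π z) = G.dist o z) : G ≃g G where
  toEquiv := π
  map_rel_iff' := by intro a b; rw [hanti, hanti, hπ, hπ]

/-- **Characterization of anti-trees.**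
Let `G` be a connected graph with standard weights on a countable vertex set with root `o`,
such that no two vertices in the same sphere (with respect to the combinatorial graph
distance to `o`) are adjacent.  Then `G` is an anti-tree (every vertex of the `k`-th sphere
is adjacent to every vertex of the `(k+1)`-st sphere and there are no other edges) if and
only if for all vertices `x, x', y, y'` with `|x| = |x'|`, `|y| = |y'|`, `(x = y ↔ x' = y')`
and `(x = y' ↔ x' = y)`, there is a graph automorphism interchanging `x` with `x'` and
`y` with `y'`. -/
theorem antiTree_characterization {X : Type*} [Countable X] (G : SimpleGraph X)
    (hconn : G.Connected) (o : X)
    (hsphere : ∀ x y, G.Adj x y → G.dist o x ≠ G.dist o y) :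
    (∀ x y, G.Adj x y ↔ (G.dist o x + 1 = G.dist o y ∨ G.dist o y + 1 = G.dist o x)) ↔
      (∀ x x' y y' : X, G.dist o x = G.dist o x' → G.dist o y = G.dist o y' →
        (x = y ↔ x' = y') → (x = y' ↔ x' = y) →
        ∃ ι : G ≃g G, ι x = x' ∧ ι x' = x ∧ ι y = y' ∧ ι y' = y) := by
  classical
  constructor
  · intro hanti x x' y y' hxx hyy h1 h2
    have swapx : ∀ z, G.dist o (Equiv.swap x x' z) = G.dist o z := by
      intro z
      rcases eq_or_ne z x with rfl | hzx
      · rw [Equiv.swap_apply_left]; exact hxx.symm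
      rcases eq_or_ne z x' with rfl | hzx'
      · rw [Equiv.swap_apply_right]; exact hxx
      · rw [Equiv.swap_apply_of_ne_of_ne hzx hzx']
    have swapy : ∀ z, G.dist o (Equiv.swap y y' z) = G.dist o z := by
      intro z
      rcases eq_or_ne z y with rfl | hzy
      · rw [Equiv.swap_apply_left]; exact hyy.symm
      rcases eq_or_ne z y' with rfl | hzy'
      · rw [Equiv.swap_apply_right]; exact hyy
      · rw [Equiv.swap_apply_of_ne_of_ne hzy hzy']
    by_cases hxy : x = y
    · -- then x' = y'; swap x x' works
      have hxy' : x' = y' := h1.mp hxy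
      refine ⟨levelIso G o hanti (Equiv.swap x x') swapx, ?_, ?_, ?_, ?_⟩ <;>
        simp [levelIso, ← hxy, ← hxy', Equiv.swap_apply_left, Equiv.swap_apply_right]
    by_cases hxy2 : x = y'
    · -- then x' = y; swap x x' works
      have hx'y : x' = y := h2.mp hxy2
      refine ⟨levelIso G o hanti (Equiv.swap x x') swapx, ?_, ?_, ?_, ?_⟩ <;>
        simp [levelIso, ← hxy2, ← hx'y, Equiv.swap_apply_left, Equiv.swap_apply_right]
    · have hx'y' : x' ≠ y' := fun h => hxy (h1.mpr h)
      have hx'y : x' ≠ y := fun h => hxy2 (h2.mpr h)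
      refine ⟨levelIso G o hanti ((Equiv.swap y y').trans (Equiv.swap x x'))
        (fun z => by simp [swapx, swapy]), ?_, ?_, ?_, ?_⟩ <;>
        simp [levelIso, Equiv.swap_apply_of_ne_of_ne, hxy, hxy2, hx'y, hx'y',
          (Ne.symm hxy), (Ne.symm hxy2), (Ne.symm hx'y), (Ne.symm hx'y'),
          Equiv.swap_apply_left, Equiv.swap_apply_right]
  · intro hhom x y
    constructor
    · exact adj_dist_succ G hconn o hsphere
    · -- wlog: suffices to prove for dist o x + 1 = dist o y
      suffices key : ∀ a b : X, G.dist o a + 1 = G.dist o b → G.Adj a b by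
        rintro (h | h)
        · exact key x y h
        · exact (key y x h).symm
      intro a b hab
      -- find neighbor z of b with dist o z = dist o a
      obtain ⟨p, hp⟩ := hconn.exists_walk_length_eq_dist o b
      have hlen : 0 < p.reverse.length := by
        rw [SimpleGraph.Walk.length_reverse, hp]; omega
      obtain ⟨z, hbz, q, hq⟩ := SimpleGraph.Walk.not_nil_iff.mp
        (SimpleGraph.Walk.not_nil_iff_lt_length.mpr hlen)
      have hqlen : q.length = G.dist o a := by
        have := congrArg SimpleGraph.Walk.length hq
        rw [SimpleGraph.Walk.length_reverse, SimpleGraph.Walk.length_cons, hp] at this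
        omega
      have hz1 : G.dist o z ≤ G.dist o a := by
        have := G.dist_le q.reverse
        rwa [SimpleGraph.Walk.length_reverse, hqlen] at this
      have hz2 : G.dist o z = G.dist o a := by
        rcases adj_dist_succ G hconn o hsphere hbz.symm with h | h <;> omega
      rcases eq_or_ne z a with rfl | hza
      · exact hbz.symm
      · have hzb : z ≠ b := fun h => (hsphere z b hbz.symm) (by rw [h])
        have hab' : a ≠ b := fun h => by rw [h] at hab; omega
        obtain ⟨ι, hι1, hι2, hι3, hι4⟩ := hhom z a b b hz2 rfl
          (iff_of_false hzb hab') (iff_of_false hzb hab')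
        have : G.Adj (ι z) (ι b) := ι.map_adj_iff.mpr hbz.symm
        rwa [hι1, hι3] at this
end

section
/- Let s : ℕ₀ → ℕ be a sphere function with s₀ = 1, let b be the associated anti-tree over (X, m) with counting measure m ≡ 1 and intrinsic degree path metric ρ, and let b̃ over (ℕ₀, m̃) be the associated one-dimensional graph with intrinsic degree path metric ρ̃. Then for all x, y ∈ X with |x| ≠ |y| or x = y, ρ(x,y) = ρ̃(|x|, |y|). -/
/-!
A path in the anti-tree projects to a path in the one-dimensional graph through the levels of its
vertices, and both graphs assign to level `k` the same degree, the total size of the spheres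
adjacent to `S_k`, so the projection preserves path lengths. Conversely, all vertices of a sphere
have the same neighbours, so a path of levels lifts to a path of vertices with prescribed
endpoints, as long as it has at least one step; a path with no steps only joins a vertex to itself.
-/

open scoped BigOperators

/-- Vertex set of the anti-tree with sphere function `s`:
the `k`-th sphere has `s k` elements. -/
def AntiTree (s : ℕ → ℕ) : Type := Σ k : ℕ, Fin (s k)

namespace AntiTree

/-- Standard edge weights of the anti-tree: consecutive spheres are completely connected,
and there are no other edges. -/
def wt (s : ℕ → ℕ) (x y : AntiTree s) : ℝ :=
  if x.1 + 1 = y.1 ∨ y.1 + 1 = x.1 then 1 else 0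

/-- Weighted vertex degree with respect to the counting measure `m ≡ 1`. -/
noncomputable def Deg (s : ℕ → ℕ) (x : AntiTree s) : ℝ := ∑' y : AntiTree s, wt s x y

end AntiTree

/-- Intrinsic degree path (pseudo-)metric of a weighted graph `b` whose weighted degree
function is `D`:  `ρ(x,y)` is the infimum over finite paths from `x` to `y` of
`∑_j min(1/D(x_j), 1/D(x_{j+1}))^{1/2}`. -/
noncomputable def pathMetric {X : Type*} (b : X → X → ℝ) (D : X → ℝ) (x y : X) : ℝ :=
  sInf { L : ℝ | ∃ (k : ℕ) (p : ℕ → X), p 0 = x ∧ p k = y ∧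
    (∀ j < k, 0 < b (p j) (p (j + 1))) ∧
    L = ∑ j ∈ Finset.range k, Real.sqrt (min (1 / D (p j)) (1 / D (p (j + 1)))) }

/-- The intrinsic degree path metric of the anti-tree. -/
noncomputable def AntiTree.rho (s : ℕ → ℕ) : AntiTree s → AntiTree s → ℝ :=
  pathMetric (AntiTree.wt s) (AntiTree.Deg s)

/-- Closed balls with respect to the intrinsic degree path metric. -/
noncomputable def AntiTree.ball (s : ℕ → ℕ) (x : AntiTree s) (r : ℝ) : Set (AntiTree s) :=
  {y | AntiTree.rho s x y ≤ r}

/-- The sphere function of the `γ`-anti-tree: `s (k-1) = ⌊k ^ γ⌋` for `k ≥ 1`,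
i.e. `s k = ⌊(k+1) ^ γ⌋`. -/
noncomputable def gammaSphere (γ : ℝ) : ℕ → ℕ := fun k => ⌊((k : ℝ) + 1) ^ γ⌋₊
namespace OneDim

/-- Measure of the one-dimensional graph associated with an anti-tree. -/
noncomputable def m (s : ℕ → ℕ) (k : ℕ) : ℝ := (s k : ℝ)

/-- Edge weights of the one-dimensional graph associated with an anti-tree. -/
noncomputable def wt (s : ℕ → ℕ) (k l : ℕ) : ℝ :=
  if k + 1 = l ∨ l + 1 = k then (s k : ℝ) * (s l : ℝ) else 0

/-- Weighted vertex degree of the one-dimensional graph. -/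
noncomputable def Deg (s : ℕ → ℕ) (k : ℕ) : ℝ := (1 / m s k) * ∑' l : ℕ, wt s k l

/-- Intrinsic degree path metric of the one-dimensional graph. -/
noncomputable def rho (s : ℕ → ℕ) : ℕ → ℕ → ℝ := pathMetric (wt s) (Deg s)

/-- Closed balls of the one-dimensional graph. -/
noncomputable def ball (s : ℕ → ℕ) (k : ℕ) (r : ℝ) : Set ℕ := {l | rho s k l ≤ r}

/-- Measure of a subset of the one-dimensional graph. -/
noncomputable def vol (s : ℕ → ℕ) (A : Set ℕ) : ℝ := ∑' l : ℕ, Set.indicator A (m s) l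

end OneDim

open Finset

def pathLengths {X : Type*} (b : X → X → ℝ) (D : X → ℝ) (x y : X) : Set ℝ :=
  { L : ℝ | ∃ (k : ℕ) (p : ℕ → X), p 0 = x ∧ p k = y ∧
    (∀ j < k, 0 < b (p j) (p (j + 1))) ∧
    L = ∑ j ∈ Finset.range k, Real.sqrt (min (1 / D (p j)) (1 / D (p (j + 1)))) }

section PathMetricMap

variable {X Y : Type*} {b : X → X → ℝ} {D : X → ℝ} {b' : Y → Y → ℝ} {D' : Y → ℝ} {f : X → Y}

theorem pathMetric_eq_sInf_pathLengths (x y : X) :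
    pathMetric b D x y = sInf (pathLengths b D x y) := rfl

theorem mem_pathLengths_map (hb : ∀ a a', 0 < b a a' → 0 < b' (f a) (f a'))
    (hD : ∀ a, D a = D' (f a)) {x y : X} {L : ℝ} (hL : L ∈ pathLengths b D x y) :
    L ∈ pathLengths b' D' (f x) (f y) := by
  obtain ⟨k, p, rfl, rfl, hpath, rfl⟩ := hL
  exact ⟨k, f ∘ p, rfl, rfl, fun j hj => hb _ _ (hpath j hj), by simp only [hD, Function.comp]⟩

theorem mem_pathLengths_of_map (hb : ∀ a a', 0 < b' (f a) (f a') → 0 < b a a')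
    (hD : ∀ a, D a = D' (f a)) (hrange : ∀ u v, 0 < b' u v → u ∈ Set.range f)
    {x y : X} (hxy : f x ≠ f y ∨ x = y) {L : ℝ} (hL : L ∈ pathLengths b' D' (f x) (f y)) :
    L ∈ pathLengths b D x y := by
  obtain ⟨k, q, hq0, hqk, hpath, rfl⟩ := hL
  rcases Nat.eq_zero_or_pos k with rfl | hk
  · obtain rfl : x = y := hxy.resolve_left (not_not.2 (hq0.symm.trans hqk))
    exact ⟨0, fun _ => x, rfl, rfl, by simp, by simp⟩
  let lift : ℕ → X := fun i =>
    if h : i < k then (hrange _ _ (hpath i h)).choose else y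
  let p : ℕ → X := fun i => if i = 0 then x else lift i
  have hp : ∀ i ≤ k, f (p i) = q i := by
    intro i hi
    rcases eq_or_ne i 0 with rfl | hi0
    · simp [p, hq0]
    rcases hi.lt_or_eq with hik | rfl
    · simpa [p, lift, hi0, hik] using (hrange _ _ (hpath i hik)).choose_spec
    · simp [p, lift, hi0, hqk]
  refine ⟨k, p, by simp [p], by simp [p, lift, hk.ne'], fun j hj => hb _ _ ?_, ?_⟩
  · rw [hp j hj.le, hp (j + 1) hj]
    exact hpath j hj
  · refine sum_congr rfl fun j hj => ?_
    have hj := mem_range.1 hj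
    rw [hD, hD, hp j hj.le, hp (j + 1) hj]

theorem pathMetric_eq_pathMetric_map (hb : ∀ a a', 0 < b a a' ↔ 0 < b' (f a) (f a'))
    (hD : ∀ a, D a = D' (f a)) (hrange : ∀ u v, 0 < b' u v → u ∈ Set.range f)
    {x y : X} (hxy : f x ≠ f y ∨ x = y) :
    pathMetric b D x y = pathMetric b' D' (f x) (f y) := by
  rw [pathMetric_eq_sInf_pathLengths, pathMetric_eq_sInf_pathLengths]
  exact congrArg sInf <| Set.ext fun L => ⟨mem_pathLengths_map (fun a a' => (hb a a').1) hD,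
    mem_pathLengths_of_map (fun a a' => (hb a a').2) hD hrange hxy⟩

end PathMetricMap

theorem AntiTree.wt_pos_iff (s : ℕ → ℕ) (x y : AntiTree s) :
    0 < AntiTree.wt s x y ↔ x.1 + 1 = y.1 ∨ y.1 + 1 = x.1 := by
  unfold AntiTree.wt
  split_ifs <;> simp_all

theorem AntiTree.Deg_eq (s : ℕ → ℕ) (x : AntiTree s) :
    AntiTree.Deg s x = ∑' l, if x.1 + 1 = l ∨ l + 1 = x.1 then (s l : ℝ) else 0 := by
  have hsupp : ∀ y ∉ (range (x.1 + 2)).sigma fun k => (univ : Finset (Fin (s k))),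
      AntiTree.wt s x y = 0 := by
    intro y hy
    simp only [mem_sigma, mem_range, mem_univ, and_true] at hy
    unfold AntiTree.wt
    rw [if_neg]
    omega
  unfold AntiTree.Deg
  change ∑' y : Σ k, Fin (s k), AntiTree.wt s x y = _
  rw [(summable_of_ne_finset_zero hsupp).tsum_sigma' fun _ => .of_finite]
  congr 1 with l
  rw [tsum_fintype]
  unfold AntiTree.wt
  split_ifs <;> simp_all

theorem OneDim.wt_pos_iff (s : ℕ → ℕ) (k l : ℕ) :
    0 < OneDim.wt s k l ↔ (k + 1 = l ∨ l + 1 = k) ∧ s k ≠ 0 ∧ s l ≠ 0 := by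
  unfold OneDim.wt
  split_ifs with h
  · rw [← Nat.cast_mul, Nat.cast_pos, Nat.pos_iff_ne_zero, mul_ne_zero_iff]
    simp [h]
  · simp [h]

theorem OneDim.Deg_eq (s : ℕ → ℕ) {k : ℕ} (hk : s k ≠ 0) :
    OneDim.Deg s k = ∑' l, if k + 1 = l ∨ l + 1 = k then (s l : ℝ) else 0 := by
  have hwt : ∀ l, OneDim.wt s k l = s k * if k + 1 = l ∨ l + 1 = k then (s l : ℝ) else 0 := by
    intro l
    rw [OneDim.wt, mul_ite, mul_zero]
  rw [OneDim.Deg, OneDim.m]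
  simp only [hwt, tsum_mul_left]
  field_simp

theorem antiTree_rho_eq_oneDim_rho_general (s : ℕ → ℕ)
    (x y : AntiTree s) (hxy : x.1 ≠ y.1 ∨ x = y) :
    AntiTree.rho s x y = OneDim.rho s x.1 y.1 := by
  have hsphere (a : AntiTree s) : s a.1 ≠ 0 := a.2.pos.ne'
  refine pathMetric_eq_pathMetric_map (f := fun a : AntiTree s => a.1)
    (fun a a' => ?_) (fun a => ?_) (fun u v huv => ?_) hxy
  · rw [AntiTree.wt_pos_iff, OneDim.wt_pos_iff]
    simp [hsphere]
  · rw [AntiTree.Deg_eq, OneDim.Deg_eq s (hsphere a)]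
  · exact ⟨⟨u, ⟨0, Nat.pos_of_ne_zero ((OneDim.wt_pos_iff s u v).1 huv).2.1⟩⟩, rfl⟩

/-- **Intrinsic metric of anti-trees.**
For an anti-tree with sphere function `s` (with `s₀ = 1`), counting measure `m ≡ 1` and
intrinsic degree path metric `ρ`, and the associated one-dimensional graph over `(ℕ₀, m̃)`
with intrinsic degree path metric `ρ̃`, we have `ρ(x,y) = ρ̃(|x|,|y|)` for all vertices
`x, y` with `|x| ≠ |y|` or `x = y`. -/
theorem antiTree_rho_eq_oneDim_rho (s : ℕ → ℕ) (hs : ∀ k, 0 < s k) (hs0 : s 0 = 1)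
    (x y : AntiTree s) (hxy : x.1 ≠ y.1 ∨ x = y) :
    AntiTree.rho s x y = OneDim.rho s x.1 y.1 :=
  antiTree_rho_eq_oneDim_rho_general s x y hxy
end

section
/- Let γ ∈ [0,2) and let b be the γ-anti-tree over (X, m) with counting measure m ≡ 1, intrinsic degree path metric ρ, closed balls B_o(r) := {y : ρ(o,y) ≤ r}, and combinatorial balls A_N := S₀ ∪ … ∪ S_N. Then there exist constants c, C > 0 such that for all r ≥ 0: A_{⌊c · r^{2/(2−γ)}⌋} ⊆ B_o(r) ⊆ A_{⌈C · r^{2/(2−γ)}⌉}. -/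
open scoped BigOperators

/-! All vertices of the sphere `S_k` have the same degree `s_{k+1} + s_{k-1} ≍ k^γ`, so every
edge between `S_k` and `S_{k+1}` has the same intrinsic length `ℓ_k ≍ k^{-γ/2}`. The potential
`x ↦ ∑_{j<|x|} ℓ_j` grows by exactly the length of each outward edge and shrinks along inward
ones, so it bounds `ρ(o, ·)` from below, while a radial path attains it. Hence
`ρ(o, x) = ∑_{j<|x|} ℓ_j ≍ |x|^{1-γ/2}`, and inverting this power compares the balls. -/

open Finset

theorem rpow_le_tangent {β : ℝ} (hβ0 : 0 ≤ β) (hβ1 : β ≤ 1) {a x : ℝ} (ha : 0 < a)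
    (hx : 0 ≤ x) : x ^ β ≤ a ^ β + β * a ^ (β - 1) * (x - a) := by
  have hb := rpow_one_add_le_one_add_mul_self (s := x / a - 1) (by linarith [div_nonneg hx ha.le])
    hβ0 hβ1
  rw [add_sub_cancel, Real.div_rpow hx ha.le, div_le_iff₀ (by positivity)] at hb
  calc x ^ β ≤ (1 + β * (x / a - 1)) * a ^ β := hb
    _ = a ^ β + β * a ^ (β - 1) * (x - a) := by
      rw [Real.rpow_sub_one ha.ne']
      field_simp

theorem sum_range_rpow_le {β : ℝ} (hβ0 : 0 < β) (hβ1 : β ≤ 1) (N : ℕ) :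
    ∑ j ∈ range N, ((j : ℝ) + 1) ^ (β - 1) ≤ (N : ℝ) ^ β / β := by
  have htel := sum_range_sub (fun j : ℕ => (j : ℝ) ^ β) N
  simp only [Nat.cast_add, Nat.cast_one, Nat.cast_zero, Real.zero_rpow hβ0.ne', sub_zero] at htel
  rw [le_div_iff₀ hβ0, sum_mul, ← htel]
  refine sum_le_sum fun j _ => ?_
  have := rpow_le_tangent hβ0.le hβ1 (a := (j : ℝ) + 1) (x := j) (by positivity) (by positivity)
  linarith

theorem le_sum_range_rpow {β : ℝ} (hβ0 : 0 < β) (hβ1 : β ≤ 1) (N : ℕ) :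
    (N : ℝ) ^ β / 3 ≤ ∑ j ∈ range N, ((j : ℝ) + 3) ^ (β - 1) := by
  rcases N.eq_zero_or_pos with rfl | hN
  · simp [Real.zero_rpow hβ0.ne']
  have hN' : (1 : ℝ) ≤ N := by exact_mod_cast hN
  have hterm : ∀ j ∈ range N, (3 * (N : ℝ)) ^ (β - 1) ≤ ((j : ℝ) + 3) ^ (β - 1) := by
    intro j hj
    have : (j : ℝ) + 1 ≤ N := by exact_mod_cast mem_range.1 hj
    exact Real.rpow_le_rpow_of_nonpos (by positivity) (by linarith) (by linarith)
  have h3 : (3 : ℝ)⁻¹ ≤ 3 ^ (β - 1) := by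
    rw [← Real.rpow_neg_one]
    exact Real.rpow_le_rpow_of_exponent_le (by norm_num) (by linarith)
  calc (N : ℝ) ^ β / 3 ≤ 3 ^ (β - 1) * N ^ β := by
        rw [div_eq_inv_mul]
        exact mul_le_mul_of_nonneg_right h3 (by positivity)
    _ = N * (3 * (N : ℝ)) ^ (β - 1) := by
        rw [Real.mul_rpow (by norm_num) (by positivity),
          Real.rpow_sub_one (x := (N : ℝ)) (by positivity)]
        field_simp
    _ ≤ ∑ j ∈ range N, ((j : ℝ) + 3) ^ (β - 1) := by
        simpa using card_nsmul_le_sum _ _ _ hterm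

theorem sqrt_div_rpow (a : ℝ) {t : ℝ} (ht : 0 ≤ t) (γ : ℝ) :
    √(a / t ^ γ) = √a * t ^ (-(γ / 2)) := by
  rw [Real.sqrt_div' _ (by positivity), Real.sqrt_eq_rpow (t ^ γ), ← Real.rpow_mul ht, one_div,
    ← div_eq_mul_inv, Real.rpow_neg ht, div_eq_mul_inv]

theorem le_mul_rpow_inv_iff {x a r β : ℝ} (hx : 0 ≤ x) (ha : 0 ≤ a) (hr : 0 ≤ r) (hβ : 0 < β) :
    x ≤ a ^ β⁻¹ * r ^ β⁻¹ ↔ x ^ β ≤ a * r := by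
  rw [← Real.mul_rpow ha hr, Real.le_rpow_inv_iff_of_pos hx (by positivity) hβ]

theorem hasSum_sigma_ite_fst_eq {α : Type*} [DecidableEq α] {β : α → Type*}
    [∀ a, Fintype (β a)] (a : α) :
    HasSum (fun y : Σ a, β a => if y.1 = a then (1 : ℝ) else 0) (Fintype.card (β a)) := by
  have h := hasSum_sum_of_ne_finset_zero (L := SummationFilter.unconditional _)
    (f := fun y : Σ a, β a => if y.1 = a then (1 : ℝ) else 0)
    (s := univ.map (Function.Embedding.sigmaMk a)) ?_
  · rw [sum_map] at h
    simpa using h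
  · rintro ⟨b, i⟩ hy
    rw [if_neg]
    rintro rfl
    exact hy (mem_map_of_mem _ (mem_univ i))

section PathMetric

variable {X : Type*} {b : X → X → ℝ} {D : X → ℝ} {x y : X}

theorem pathMetric_le_sum (k : ℕ) (p : ℕ → X) (h0 : p 0 = x) (hk : p k = y)
    (hp : ∀ j < k, 0 < b (p j) (p (j + 1))) :
    pathMetric b D x y ≤ ∑ j ∈ range k, √(min (1 / D (p j)) (1 / D (p (j + 1)))) :=
  csInf_le ⟨0, by rintro _ ⟨k, p, -, -, -, rfl⟩; positivity⟩ ⟨k, p, h0, hk, hp, rfl⟩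

theorem sub_le_pathMetric (f : X → ℝ)
    (hf : ∀ u v, 0 < b u v → f v - f u ≤ √(min (1 / D u) (1 / D v)))
    (hxy : ∃ (k : ℕ) (p : ℕ → X), p 0 = x ∧ p k = y ∧ ∀ j < k, 0 < b (p j) (p (j + 1))) :
    f y - f x ≤ pathMetric b D x y := by
  obtain ⟨k, p, h0, hk, hp⟩ := hxy
  refine le_csInf ⟨_, k, p, h0, hk, hp, rfl⟩ ?_
  rintro _ ⟨k, p, rfl, rfl, hp, rfl⟩
  rw [← sum_range_sub (fun j => f (p j))]
  exact sum_le_sum fun j hj => hf _ _ (hp j (mem_range.1 hj))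

end PathMetric

namespace AntiTree

variable {s : ℕ → ℕ}

/-- At `k = 0` there is no inner sphere, while `k - 1` would truncate to `0`. -/
noncomputable def levelDeg (s : ℕ → ℕ) (k : ℕ) : ℝ :=
  s (k + 1) + if k = 0 then 0 else (s (k - 1) : ℝ)

noncomputable def stepLength (s : ℕ → ℕ) (k : ℕ) : ℝ :=
  √(min (1 / levelDeg s k) (1 / levelDeg s (k + 1)))

theorem hasSum_ite_fst_eq (n : ℕ) :
    HasSum (fun y : AntiTree s => if y.1 = n then (1 : ℝ) else 0) (s n) := by
  have h := hasSum_sigma_ite_fst_eq (β := fun k => Fin (s k)) n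
  rwa [Fintype.card_fin] at h

theorem wt_eq (x y : AntiTree s) :
    wt s x y = (if y.1 = x.1 + 1 then 1 else 0) + if y.1 + 1 = x.1 then 1 else 0 := by
  unfold wt
  split_ifs <;> first | omega | norm_num

theorem deg_eq (x : AntiTree s) : Deg s x = levelDeg s x.1 := by
  have hdown : HasSum (fun y : AntiTree s => if y.1 + 1 = x.1 then (1 : ℝ) else 0)
      (if x.1 = 0 then 0 else s (x.1 - 1)) := by
    split_ifs with hx
    · simpa only [hx, Nat.add_eq_zero_iff, one_ne_zero, and_false, if_false] using hasSum_zero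
    · convert hasSum_ite_fst_eq (s := s) (x.1 - 1) using 3 with y
      omega
  rw [Deg, levelDeg]
  simp_rw [wt_eq]
  exact ((hasSum_ite_fst_eq (x.1 + 1)).add hdown).tsum_eq

theorem wt_pos_iff_s7 {x y : AntiTree s} : 0 < wt s x y ↔ x.1 + 1 = y.1 ∨ y.1 + 1 = x.1 := by
  unfold wt
  split_ifs with h <;> simp [h]

theorem eq_of_fst_eq_zero (hs0 : s 0 = 1) {x y : AntiTree s} (hx : x.1 = 0) (hy : y.1 = 0) :
    x = y := by
  obtain ⟨_, i⟩ := x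
  obtain ⟨_, j⟩ := y
  subst hx hy
  have := i.isLt
  have := j.isLt
  congr
  omega

theorem exists_path_from_root (hs : ∀ k, 0 < s k) (hs0 : s 0 = 1) {o : AntiTree s}
    (ho : o.1 = 0) (x : AntiTree s) :
    ∃ p : ℕ → AntiTree s, p 0 = o ∧ p x.1 = x ∧ ∀ j ≤ x.1, (p j).1 = j := by
  refine ⟨fun j => if j = x.1 then x else if j = 0 then o else ⟨j, ⟨0, hs j⟩⟩, ?_, by simp, ?_⟩
  · by_cases h : 0 = x.1
    · simpa [h] using eq_of_fst_eq_zero hs0 h.symm ho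
    · simp [h]
  · intro j _
    dsimp only
    split_ifs with h h' <;> simp [*]

theorem rho_root_eq (hs : ∀ k, 0 < s k) (hs0 : s 0 = 1) {o : AntiTree s} (ho : o.1 = 0)
    (x : AntiTree s) : rho s o x = ∑ j ∈ range x.1, stepLength s j := by
  obtain ⟨p, hp0, hpx, hpj⟩ := exists_path_from_root hs hs0 ho x
  have hadj : ∀ j < x.1, 0 < wt s (p j) (p (j + 1)) := fun j hj =>
    wt_pos_iff_s7.2 (Or.inl (by rw [hpj j hj.le, hpj (j + 1) hj]))
  refine le_antisymm ?_ ?_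
  · refine (pathMetric_le_sum x.1 p hp0 hpx hadj).trans_eq (sum_congr rfl fun j hj => ?_)
    have hj := mem_range.1 hj
    rw [deg_eq, deg_eq, hpj j hj.le, hpj (j + 1) hj, stepLength]
  · have := sub_le_pathMetric (b := wt s) (D := Deg s)
      (fun y => ∑ j ∈ range y.1, stepLength s j) ?_ ⟨x.1, p, hp0, hpx, hadj⟩
    · rw [ho, range_zero, sum_empty, sub_zero] at this
      exact this
    intro u v huv
    rcases wt_pos_iff_s7.1 huv with h | h
    · rw [← h, sum_range_succ, add_sub_cancel_left, deg_eq, deg_eq, ← h, stepLength]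
    · rw [← h, sum_range_succ, sub_add_cancel_left]
      exact (neg_nonpos.2 (Real.sqrt_nonneg _)).trans (Real.sqrt_nonneg _)

end AntiTree

section GammaAntiTree

open AntiTree

variable {γ : ℝ}

theorem gammaSphere_zero : gammaSphere γ 0 = 1 := by
  simp [gammaSphere]

theorem gammaSphere_le (k : ℕ) : (gammaSphere γ k : ℝ) ≤ ((k : ℝ) + 1) ^ γ :=
  Nat.floor_le (by positivity)

theorem half_lt_gammaSphere (hγ : 0 ≤ γ) (k : ℕ) :
    ((k : ℝ) + 1) ^ γ / 2 < gammaSphere γ k :=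
  Nat.div_two_lt_floor (Real.one_le_rpow (by linarith [k.cast_nonneg (α := ℝ)]) hγ)

theorem gammaSphere_pos (hγ : 0 ≤ γ) (k : ℕ) : 0 < gammaSphere γ k :=
  Nat.floor_pos.2 (Real.one_le_rpow (by linarith [k.cast_nonneg (α := ℝ)]) hγ)

theorem gammaSphere_mono (hγ : 0 ≤ γ) : Monotone (gammaSphere γ) := fun a b hab =>
  Nat.floor_mono (Real.rpow_le_rpow (by positivity) (by gcongr) hγ)

theorem levelDeg_gammaSphere_le (hγ : 0 ≤ γ) (k : ℕ) :
    levelDeg (gammaSphere γ) k ≤ 2 * ((k : ℝ) + 2) ^ γ := by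
  have hup : (gammaSphere γ (k + 1) : ℝ) ≤ ((k : ℝ) + 2) ^ γ := by
    simpa [add_assoc, one_add_one_eq_two] using gammaSphere_le (γ := γ) (k + 1)
  have hdown : (gammaSphere γ (k - 1) : ℝ) ≤ gammaSphere γ (k + 1) := by
    exact_mod_cast gammaSphere_mono hγ (by omega : k - 1 ≤ k + 1)
  rw [levelDeg]
  split_ifs <;> linarith [show (0 : ℝ) ≤ ((k : ℝ) + 2) ^ γ from by positivity]

theorem half_rpow_le_levelDeg_gammaSphere (hγ : 0 ≤ γ) (k : ℕ) :
    ((k : ℝ) + 1) ^ γ / 2 ≤ levelDeg (gammaSphere γ) k := by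
  have hk := half_lt_gammaSphere hγ k
  have hmono : (gammaSphere γ k : ℝ) ≤ gammaSphere γ (k + 1) := by
    exact_mod_cast gammaSphere_mono hγ k.le_succ
  rw [levelDeg]
  split_ifs <;> linarith [(gammaSphere γ (k - 1)).cast_nonneg (α := ℝ)]

theorem stepLength_gammaSphere_le (hγ : 0 ≤ γ) (k : ℕ) :
    stepLength (gammaSphere γ) k ≤ √2 * ((k : ℝ) + 1) ^ (-(γ / 2)) := by
  have hpos : 0 < ((k : ℝ) + 1) ^ γ / 2 := by positivity
  have hinv : 1 / levelDeg (gammaSphere γ) k ≤ 2 / ((k : ℝ) + 1) ^ γ :=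
    (one_div_le_one_div_of_le hpos (half_rpow_le_levelDeg_gammaSphere hγ k)).trans_eq
      (one_div_div _ _)
  calc stepLength (gammaSphere γ) k ≤ √(2 / ((k : ℝ) + 1) ^ γ) :=
        Real.sqrt_le_sqrt ((min_le_left _ _).trans hinv)
    _ = √2 * ((k : ℝ) + 1) ^ (-(γ / 2)) := sqrt_div_rpow 2 (by positivity) γ

theorem le_stepLength_gammaSphere (hγ : 0 ≤ γ) (k : ℕ) :
    (√2)⁻¹ * ((k : ℝ) + 3) ^ (-(γ / 2)) ≤ stepLength (gammaSphere γ) k := by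
  have hinv : ∀ j ≤ k + 1, 2⁻¹ / ((k : ℝ) + 3) ^ γ ≤ 1 / levelDeg (gammaSphere γ) j := by
    intro j hj
    have hj' : (j : ℝ) + 2 ≤ k + 3 := by exact_mod_cast (by omega : j + 2 ≤ k + 3)
    have hle : levelDeg (gammaSphere γ) j ≤ 2 * ((k : ℝ) + 3) ^ γ :=
      (levelDeg_gammaSphere_le hγ j).trans (by gcongr)
    have hpos : 0 < levelDeg (gammaSphere γ) j :=
      lt_of_lt_of_le (by positivity) (half_rpow_le_levelDeg_gammaSphere hγ j)
    rw [inv_div_left, ← one_div, mul_comm]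
    exact one_div_le_one_div_of_le hpos hle
  calc (√2)⁻¹ * ((k : ℝ) + 3) ^ (-(γ / 2)) = √(2⁻¹ / ((k : ℝ) + 3) ^ γ) := by
        rw [sqrt_div_rpow _ (by positivity), Real.sqrt_inv]
    _ ≤ stepLength (gammaSphere γ) k :=
        Real.sqrt_le_sqrt (le_min (hinv k k.le_succ) (hinv (k + 1) le_rfl))

theorem rho_root_le_gammaAntiTree (hγ0 : 0 ≤ γ) (hγ2 : γ < 2)
    {o : AntiTree (gammaSphere γ)} (ho : o.1 = 0) (x : AntiTree (gammaSphere γ)) :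
    rho (gammaSphere γ) o x ≤ √2 / (1 - γ / 2) * (x.1 : ℝ) ^ (1 - γ / 2) := by
  have hexp : -(γ / 2) = 1 - γ / 2 - 1 := by ring
  rw [rho_root_eq (gammaSphere_pos hγ0) gammaSphere_zero ho]
  calc ∑ j ∈ range x.1, stepLength (gammaSphere γ) j
      ≤ ∑ j ∈ range x.1, √2 * ((j : ℝ) + 1) ^ (-(γ / 2)) :=
        sum_le_sum fun j _ => stepLength_gammaSphere_le hγ0 j
    _ = √2 * ∑ j ∈ range x.1, ((j : ℝ) + 1) ^ (1 - γ / 2 - 1) := by rw [mul_sum, hexp]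
    _ ≤ √2 * ((x.1 : ℝ) ^ (1 - γ / 2) / (1 - γ / 2)) := by
        gcongr
        exact sum_range_rpow_le (by linarith) (by linarith) x.1
    _ = √2 / (1 - γ / 2) * (x.1 : ℝ) ^ (1 - γ / 2) := by ring

theorem le_rho_root_gammaAntiTree (hγ0 : 0 ≤ γ) (hγ2 : γ < 2)
    {o : AntiTree (gammaSphere γ)} (ho : o.1 = 0) (x : AntiTree (gammaSphere γ)) :
    (x.1 : ℝ) ^ (1 - γ / 2) / (3 * √2) ≤ rho (gammaSphere γ) o x := by
  have hexp : -(γ / 2) = 1 - γ / 2 - 1 := by ring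
  rw [rho_root_eq (gammaSphere_pos hγ0) gammaSphere_zero ho]
  calc (x.1 : ℝ) ^ (1 - γ / 2) / (3 * √2) = (√2)⁻¹ * ((x.1 : ℝ) ^ (1 - γ / 2) / 3) := by
        field_simp
    _ ≤ (√2)⁻¹ * ∑ j ∈ range x.1, ((j : ℝ) + 3) ^ (1 - γ / 2 - 1) := by
        gcongr
        exact le_sum_range_rpow (by linarith) (by linarith) x.1
    _ = ∑ j ∈ range x.1, (√2)⁻¹ * ((j : ℝ) + 3) ^ (-(γ / 2)) := by rw [mul_sum, hexp]
    _ ≤ ∑ j ∈ range x.1, stepLength (gammaSphere γ) j :=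
        sum_le_sum fun j _ => le_stepLength_gammaSphere hγ0 j

end GammaAntiTree

/-- **Intrinsic balls versus combinatorial balls in anti-trees.**
For `γ ∈ [0,2)` and the `γ`-anti-tree with root `o`, intrinsic degree path metric `ρ` and
combinatorial balls `A_N = S₀ ∪ … ∪ S_N`, there are constants `c, C > 0` such that for all
`r ≥ 0`:  `A_{⌊c r^{2/(2-γ)}⌋} ⊆ B_o(r) ⊆ A_{⌈C r^{2/(2-γ)}⌉}`. -/
theorem gammaAntiTree_ball_comparison (γ : ℝ) (hγ0 : 0 ≤ γ) (hγ2 : γ < 2)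
    (o : AntiTree (gammaSphere γ)) (ho : o.1 = 0) :
    ∃ c C : ℝ, 0 < c ∧ 0 < C ∧ ∀ r : ℝ, 0 ≤ r →
      {x : AntiTree (gammaSphere γ) | x.1 ≤ ⌊c * r ^ (2 / (2 - γ))⌋₊} ⊆
          AntiTree.ball (gammaSphere γ) o r ∧
      AntiTree.ball (gammaSphere γ) o r ⊆
          {x : AntiTree (gammaSphere γ) | x.1 ≤ ⌈C * r ^ (2 / (2 - γ))⌉₊} := by
  have hβ : 0 < 1 - γ / 2 := by linarith
  have hexp : 2 / (2 - γ) = (1 - γ / 2)⁻¹ := by field_simp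
  refine ⟨((1 - γ / 2) / √2) ^ (1 - γ / 2)⁻¹, (3 * √2) ^ (1 - γ / 2)⁻¹, by positivity,
    by positivity, fun r hr => ⟨fun x hx => ?_, fun x hx => ?_⟩⟩
  · have hxr : (x.1 : ℝ) ^ (1 - γ / 2) ≤ (1 - γ / 2) / √2 * r := by
      rw [hexp] at hx
      rw [← le_mul_rpow_inv_iff (Nat.cast_nonneg _) (by positivity) hr hβ]
      exact (Nat.cast_le.2 hx).trans (Nat.floor_le (by positivity))
    calc AntiTree.rho (gammaSphere γ) o x ≤ √2 / (1 - γ / 2) * (x.1 : ℝ) ^ (1 - γ / 2) :=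
          rho_root_le_gammaAntiTree hγ0 hγ2 ho x
      _ ≤ √2 / (1 - γ / 2) * ((1 - γ / 2) / √2 * r) := by gcongr
      _ = r := by rw [← mul_assoc, div_mul_div_cancel₀' (by positivity), div_self hβ.ne', one_mul]
  · have hxr : (x.1 : ℝ) ^ (1 - γ / 2) ≤ 3 * √2 * r := by
      have := (le_rho_root_gammaAntiTree hγ0 hγ2 ho x).trans hx
      rwa [div_le_iff₀ (by positivity), mul_comm r] at this
    rw [← le_mul_rpow_inv_iff (Nat.cast_nonneg _) (by positivity) hr hβ] at hxr
    show x.1 ≤ _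
    rw [hexp]
    exact_mod_cast hxr.trans (Nat.le_ceil _)
end

section
/- Let b be a locally finite weighted graph over (X,m) such that Deg(x) := (1/m(x)) Σ_{y∈X} b(x,y) > 0 for all x ∈ X, and assume the graph is connected. Then the intrinsic degree path metric ρ(x,y) := inf over finite paths x = x₀ ∼ … ∼ x_k = y (with b(x_j,x_{j+1}) > 0) of Σ_{j=0}^{k−1} min(1/Deg(x_j), 1/Deg(x_{j+1}))^{1/2} satisfies: (i) ρ(x,y)² ≤ 1/Deg(x) whenever b(x,y) > 0; and (ii) Σ_{y∈X} b(x,y) ρ(x,y)² ≤ m(x) for all x ∈ X, i.e., ρ is an intrinsic pseudo-metric for b over (X,m). -/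
open scoped BigOperators

/-- **The intrinsic degree path metric is intrinsic.**
Let `b` be a connected locally finite weighted graph over `(X,m)` with positive weighted
degree `Deg(x) = (1/m(x)) ∑_y b(x,y)`.  Then the intrinsic degree path metric `ρ`
satisfies (i) `ρ(x,y)² ≤ 1/Deg(x)` whenever `b(x,y) > 0`, and
(ii) `∑_y b(x,y) ρ(x,y)² ≤ m(x)` for all `x`, i.e. `ρ` is an intrinsic pseudo-metric. -/
theorem pathMetric_intrinsic {X : Type*} [Countable X] (b : X → X → ℝ) (m : X → ℝ)
    (hb_symm : ∀ x y, b x y = b y x) (hb_nonneg : ∀ x y, 0 ≤ b x y)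
    (hb_diag : ∀ x, b x x = 0) (hb_sum : ∀ x, Summable fun y => b x y)
    (hm : ∀ x, 0 < m x)
    (hDeg : ∀ x, 0 < (1 / m x) * ∑' y, b x y)
    (hconn : ∀ x y : X, ∃ (k : ℕ) (p : ℕ → X), p 0 = x ∧ p k = y ∧
      ∀ j < k, 0 < b (p j) (p (j + 1))) :
    (∀ x y, 0 < b x y →
      pathMetric b (fun z => (1 / m z) * ∑' w, b z w) x y ^ 2 ≤
        1 / ((1 / m x) * ∑' w, b x w)) ∧
    ∀ x, ∑' y, b x y * pathMetric b (fun z => (1 / m z) * ∑' w, b z w) x y ^ 2 ≤ m x := by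
  set D : X → ℝ := fun z => (1 / m z) * ∑' w, b z w with hD
  have hDpos : ∀ x, 0 < D x := hDeg
  have hbdd : ∀ x y : X, BddBelow { L : ℝ | ∃ (k : ℕ) (p : ℕ → X), p 0 = x ∧ p k = y ∧
      (∀ j < k, 0 < b (p j) (p (j + 1))) ∧
      L = ∑ j ∈ Finset.range k, Real.sqrt (min (1 / D (p j)) (1 / D (p (j + 1)))) } := by
    intro x y
    refine ⟨0, ?_⟩
    rintro L ⟨k, p, _, _, _, rfl⟩
    exact Finset.sum_nonneg fun j _ => Real.sqrt_nonneg _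
  have hnonneg : ∀ x y, 0 ≤ pathMetric b D x y := by
    intro x y
    apply Real.sInf_nonneg
    rintro L ⟨k, p, _, _, _, rfl⟩
    exact Finset.sum_nonneg fun j _ => Real.sqrt_nonneg _
  have hle : ∀ x y, 0 < b x y →
      pathMetric b D x y ≤ Real.sqrt (min (1 / D x) (1 / D y)) := by
    intro x y hxy
    apply csInf_le (hbdd x y)
    refine ⟨1, fun j => if j = 0 then x else y, by simp, by simp, ?_, ?_⟩
    · intro j hj
      interval_cases j
      simpa using hxy
    · simp
  have part1 : ∀ x y, 0 < b x y → pathMetric b D x y ^ 2 ≤ 1 / D x := by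
    intro x y hxy
    have hmin : (0:ℝ) ≤ min (1 / D x) (1 / D y) :=
      le_min (one_div_pos.mpr (hDpos x)).le (one_div_pos.mpr (hDpos y)).le
    have h1 : pathMetric b D x y ^ 2 ≤ Real.sqrt (min (1 / D x) (1 / D y)) ^ 2 :=
      pow_le_pow_left₀ (hnonneg x y) (hle x y hxy) 2
    rw [Real.sq_sqrt hmin] at h1
    exact h1.trans (min_le_left _ _)
  refine ⟨part1, ?_⟩
  intro x
  have key : ∀ y, b x y * pathMetric b D x y ^ 2 ≤ b x y * (1 / D x) := by
    intro y
    rcases eq_or_lt_of_le (hb_nonneg x y) with h | h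
    · simp [← h]
    · exact mul_le_mul_of_nonneg_left (part1 x y h) h.le
  have hsum2 : Summable (fun y => b x y * (1 / D x)) := (hb_sum x).mul_right _
  have hsum1 : Summable (fun y => b x y * pathMetric b D x y ^ 2) :=
    Summable.of_nonneg_of_le
      (fun y => mul_nonneg (hb_nonneg x y) (sq_nonneg _)) key hsum2
  have hS : 0 < ∑' w, b x w := by
    have h1 := hDeg x
    have hmx : 0 < 1 / m x := one_div_pos.mpr (hm x)
    nlinarith
  calc ∑' y, b x y * pathMetric b D x y ^ 2
      ≤ ∑' y, b x y * (1 / D x) := Summable.tsum_le_tsum key hsum1 hsum2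
    _ = (∑' y, b x y) * (1 / D x) := tsum_mul_right
    _ = m x := by
        simp only [hD]
        field_simp
end
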